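/- Rightmost-occurrence lemma (key structural lemma): if v is a normal form (no reduction applies), x_o is a variable with x_o : oR ⊢ v : oR in the linear refinement type system, and [U/x_o]v reduces to some tree π, then v has the shape π₁ * (π₂ * ⋯ (π_n * x_o)⋯) for some n ≥ 0 and trees π₁,…,π_n, where * denotes the binary terminal br. -/

import Mathlib

/-- Sorts (simple types): κ ::= o | κ₁ → κ₂. -/
inductive STy where
  | o : STy
  | arr : STy → STy → STy
deriving DecidableEq

/-- ord(o)=0, ord(κ₁→κ₂)=max(ord κ₁ + 1, ord κ₂). -/
def STy.ord : STy → Nat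
  | .o => 0
  | .arr a b => max (a.ord + 1) b.ord

/-- The list of argument sorts of a sort. -/
def STy.args : STy → List STy
  | .o => []
  | .arr a b => a :: b.args

/-- The sort o → ⋯ → o → o with n arguments (sort of an arity-n terminal). -/
def tyOfArity : Nat → STy
  | 0 => .o
  | n + 1 => .arr .o (tyOfArity n)

/-- Applicative terms over non-terminals `N` and terminals `T`,
    with variables named by natural numbers. -/
inductive Tm (N T : Type) where
  | var : Nat → Tm N T
  | nt : N → Tm N T
  | tm : T → Tm N T
  | app : Tm N T → Tm N T → Tm N T
deriving DecidableEq

/-- Simultaneous substitution of the terms `ts` for the variables 0,…,k−1. -/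
def substL {N T : Type} (ts : List (Tm N T)) : Tm N T → Tm N T
  | .var n => ts.getD n (.var n)
  | .nt A => .nt A
  | .tm a => .tm a
  | .app s t => .app (substL ts s) (substL ts t)

/-- Simple typing of applicative terms: terminals of arity k have sort o^k → o. -/
inductive HasTy {N T : Type} (ar : T → Nat) (nty : N → STy) :
    List STy → Tm N T → STy → Prop where
  | var {Γ n κ} : Γ[n]? = some κ → HasTy ar nty Γ (.var n) κ
  | nt {Γ A} : HasTy ar nty Γ (.nt A) (nty A)
  | tm {Γ a} : HasTy ar nty Γ (.tm a) (tyOfArity (ar a))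
  | app {Γ s t κ₁ κ₂} : HasTy ar nty Γ s (.arr κ₁ κ₂) → HasTy ar nty Γ t κ₁ →
      HasTy ar nty Γ (.app s t) κ₂

/-- A higher-order grammar over terminals `T` with arities `ar`: finitely many
    sorted non-terminals, a base-sort start symbol, and for each non-terminal a
    finite set of rule bodies `t` (the rule being A x₁ ⋯ x_k → t), each
    well-typed of base sort under the parameter sorts of A. -/
structure Grammar (T : Type) (ar : T → Nat) where
  N : Type
  nFin : Finite N
  nty : N → STy
  start : N
  startO : nty start = .o
  rules : N → List (Tm N T)
  rulesTy : ∀ A t, t ∈ rules A → HasTy ar nty (nty A).args t .o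

/-- Iterated application to a list of arguments. -/
def appList {N T : Type} : Tm N T → List (Tm N T) → Tm N T
  | s, [] => s
  | s, t :: ts => appList (.app s t) ts

/-- One-step rewriting: a fully applied non-terminal is rewritten by one of its
    rules, and reduction is allowed in the arguments of a terminal. -/
inductive Red {T : Type} {ar : T → Nat} (G : Grammar T ar) :
    Tm G.N T → Tm G.N T → Prop where
  | step {A body ts} : body ∈ G.rules A → ts.length = (G.nty A).args.length →
      Red G (appList (.nt A) ts) (substL ts body)
  | ctx {a t t' ts₁ ts₂} : Red G t t' → ts₁.length + 1 + ts₂.length = ar a →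
      Red G (appList (.tm a) (ts₁ ++ t :: ts₂)) (appList (.tm a) (ts₁ ++ t' :: ts₂))

/-- Many-step reduction. -/
def RedStar {T : Type} {ar : T → Nat} (G : Grammar T ar) :
    Tm G.N T → Tm G.N T → Prop :=
  Relation.ReflTransGen (Red G)

/-- The grammar has order at most n. -/
def Grammar.orderLE {T : Type} {ar : T → Nat} (G : Grammar T ar) (n : Nat) : Prop :=
  ∀ A, (G.nty A).ord ≤ n

/-- Terminal alphabet of word grammars: `some a` has arity 1, `none` is the
    end-of-word symbol e of arity 0. -/
def wordAr {β : Type} : Option β → Nat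
  | none => 0
  | some _ => 1

/-- The term a₁(⋯(a_n e)⋯) representing the word a₁⋯a_n. -/
def wordTm {N β : Type} : List β → Tm N (Option β)
  | [] => .tm none
  | a :: w => .app (.tm (some a)) (wordTm w)

/-- The word language of a word grammar. -/
def WordLang {β : Type} (G : Grammar (Option β) wordAr) : Set (List β) :=
  { w | RedStar G (.nt G.start) (wordTm w) }

/-- Terminal alphabet of tree grammars: a binary `br`, a nullary `e`, and
    nullary letters from β. -/
inductive TSym (β : Type) where
  | br : TSym β
  | e : TSym β
  | ltr : β → TSym β
deriving DecidableEq

def treeAr {β : Type} : TSym β → Nat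
  | .br => 2
  | .e => 0
  | .ltr _ => 0

/-- Trees over the alphabet {br, e} ∪ β. -/
inductive BT (β : Type) where
  | e : BT β
  | ltr : β → BT β
  | br : BT β → BT β → BT β
deriving DecidableEq

/-- A tree as an applicative term. -/
def BT.toTm {N β : Type} : BT β → Tm N (TSym β)
  | .e => .tm .e
  | .ltr a => .tm (.ltr a)
  | .br l r => .app (.app (.tm .br) l.toTm) r.toTm

/-- The frontier word of a tree; `none` stands for the leaf symbol e. -/
def BT.leaves {β : Type} : BT β → List (Option β)
  | .e => [none]
  | .ltr a => [some a]
  | .br l r => l.leaves ++ r.leaves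

/-- The frontier language of a tree grammar. -/
def LeafLang {β : Type} (G : Grammar (TSym β) treeAr) : Set (List (Option β)) :=
  { w | ∃ π : BT β, RedStar G (.nt G.start) π.toTm ∧ π.leaves = w }

/-- The ε-adjusted frontier language: the single-leaf word "e" counts as ε. -/
def LeafLangE {β : Type} (G : Grammar (TSym β) treeAr) : Set (List (Option β)) :=
  { w | w ∈ LeafLang G ∧ w ≠ [none] } ∪ { w | w = [] ∧ [none] ∈ LeafLang G }

/-- Extended terms u ::= x | A | a | u U | λx.u, where an argument
    U = {u₁,…,u_k} (k ≥ 1) is a non-empty set of terms representing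
    non-deterministic choice (represented as a list). -/
inductive ETm (V N T : Type) where
  | var : V → ETm V N T
  | nt : N → ETm V N T
  | tm : T → ETm V N T
  | app : ETm V N T → List (ETm V N T) → ETm V N T
  | lam : V → ETm V N T → ETm V N T

/-- Iterated application of a head to a list of argument sets. -/
def appLE {V N T : Type} : ETm V N T → List (List (ETm V N T)) → ETm V N T
  | u, [] => u
  | u, U :: Us => appLE (.app u U) Us

/-- The set-valued substitution [σ]u of term-sets for variables in an
    extended term. -/
def dsub {V N T : Type} [DecidableEq V]
    (σ : V → Option (List (ETm V N T))) : ETm V N T → List (ETm V N T)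
  | .var x => (σ x).getD [.var x]
  | .nt A => [.nt A]
  | .tm a => [.tm a]
  | .app u U =>
      (dsub σ u).map (fun v => .app v (U.attach.flatMap (fun w => dsub σ w.1)))
  | .lam x u =>
      (dsub (fun y => if y = x then none else σ y) u).map (.lam x)
termination_by u => sizeOf u
decreasing_by
  all_goals simp_wf
  all_goals first
    | omega
    | (have := List.sizeOf_lt_of_mem w.2; omega)

/-- v ∈ [σ]u : v is one of the results of the set-valued substitution. -/
def DSub {V N T : Type} [DecidableEq V]
    (σ : V → Option (List (ETm V N T))) (u v : ETm V N T) : Prop :=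
  v ∈ dsub σ u

/-- An extended higher-order grammar: rules A x₁ ⋯ x_k → u. -/
structure EGrammar (V N T : Type) (ar : T → Nat) where
  start : N
  rules : N → List V → ETm V N T → Prop

/-- The substitution sending the parameters xs to the argument sets Us. -/
def sigmaOf {V N T : Type} [DecidableEq V] (xs : List V)
    (Us : List (List (ETm V N T))) : V → Option (List (ETm V N T)) :=
  fun x => ((xs.zip Us).find? (fun p => p.1 = x)).map Prod.snd

/-- One-step reduction of extended terms: a fully applied non-terminal is
    rewritten (lazily, via the set-valued substitution); under a terminal,
    either a singleton argument is reduced, or a non-singleton argument set is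
    collapsed to one of its members. -/
inductive ERed {V N T : Type} [DecidableEq V] {ar : T → Nat}
    (G : EGrammar V N T ar) : ETm V N T → ETm V N T → Prop where
  | step {A xs body Us u'} : G.rules A xs body → Us.length = xs.length →
      DSub (sigmaOf xs Us) body u' →
      ERed G (appLE (.nt A) Us) u'
  | ctx {a u u' Us₁ Us₂} : ERed G u u' →
      Us₁.length + 1 + Us₂.length = ar a →
      ERed G (appLE (.tm a) (Us₁ ++ [u] :: Us₂))
             (appLE (.tm a) (Us₁ ++ [u'] :: Us₂))
  | collapse {a u U Us₁ Us₂} : u ∈ U → U.length ≠ 1 →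
      Us₁.length + 1 + Us₂.length = ar a →
      ERed G (appLE (.tm a) (Us₁ ++ U :: Us₂))
             (appLE (.tm a) (Us₁ ++ [u] :: Us₂))

/-- Many-step reduction of extended terms. -/
def ERedStar {V N T : Type} [DecidableEq V] {ar : T → Nat}
    (G : EGrammar V N T ar) : ETm V N T → ETm V N T → Prop :=
  Relation.ReflTransGen (ERed G)

/-- Types of the linear refinement type system: ρ ::= o | oR | ρ → ρ'. -/
inductive Ty2 where
  | o : Ty2
  | oR : Ty2
  | arr : Ty2 → Ty2 → Ty2
deriving DecidableEq

mutual
  /-- Balanced types: o is balanced; ρ → ρ' is balanced if both are balanced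
      or both are unbalanced. -/
  inductive Bal : Ty2 → Prop where
    | o : Bal .o
    | bb {a b} : Bal a → Bal b → Bal (.arr a b)
    | uu {a b} : Unbal a → Unbal b → Bal (.arr a b)

  /-- Unbalanced (linear) types: oR is unbalanced; ρ → ρ' is unbalanced if
      ρ is balanced and ρ' unbalanced. -/
  inductive Unbal : Ty2 → Prop where
    | oR : Unbal .oR
    | bu {a b} : Bal a → Unbal b → Unbal (.arr a b)
end

/-- A well-formed type is balanced or unbalanced. -/
def Ty2.WF (ρ : Ty2) : Prop := Bal ρ ∨ Unbal ρ

/-- The balanced "forgetful" translation, mapping oR to o. -/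
def forget : Ty2 → Ty2
  | .o => .o
  | .oR => .o
  | .arr a b => .arr (forget a) (forget b)

/-- All bindings of the environment are balanced. -/
def BalEnv (Φ : Finset (Nat × Ty2)) : Prop := ∀ p ∈ Φ, Bal p.2

/-- The linear refinement type system for terms of the transformed grammar:
    base types o (balanced) and oR (unbalanced/linear); br has the types
    o → o → o and o → oR → oR; e has the types o and oR; source letters have
    type o; each non-terminal A may be used at its unbalanced type ntyR A or
    at the corresponding balanced type forget (ntyR A); variables and constants
    require the remaining environment to be balanced; application splits the
    environment, the union being allowed only if shared bindings are balanced;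
    argument sets share the environment; abstraction extends the environment. -/
inductive RTy {N β : Type} (ntyR : N → Ty2) :
    Finset (Nat × Ty2) → ETm Nat N (TSym β) → Ty2 → Prop where
  | var {Φ x ρ} : (x, ρ) ∈ Φ → (∀ p ∈ Φ.erase (x, ρ), Bal p.2) →
      RTy ntyR Φ (.var x) ρ
  | ltr {Φ a} : BalEnv Φ → RTy ntyR Φ (.tm (.ltr a)) .o
  | brO {Φ} : BalEnv Φ → RTy ntyR Φ (.tm .br) (.arr .o (.arr .o .o))
  | brR {Φ} : BalEnv Φ → RTy ntyR Φ (.tm .br) (.arr .o (.arr .oR .oR))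
  | epsO {Φ} : BalEnv Φ → RTy ntyR Φ (.tm .e) .o
  | epsR {Φ} : BalEnv Φ → RTy ntyR Φ (.tm .e) .oR
  | ntR {Φ A} : BalEnv Φ → RTy ntyR Φ (.nt A) (ntyR A)
  | ntO {Φ A} : BalEnv Φ → RTy ntyR Φ (.nt A) (forget (ntyR A))
  | app {Φ₀ Φ₁ u U ρ₁ ρ} : RTy ntyR Φ₀ u (.arr ρ₁ ρ) → U ≠ [] →
      (∀ v ∈ U, RTy ntyR Φ₁ v ρ₁) →
      (∀ p ∈ Φ₀ ∩ Φ₁, Bal p.2) →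
      RTy ntyR (Φ₀ ∪ Φ₁) (.app u U) ρ
  | abs {Φ x u ρ' ρ} : RTy ntyR (insert (x, ρ') Φ) u ρ →
      (∀ ρ'', (x, ρ'') ∉ Φ) →
      RTy ntyR Φ (.lam x u) (.arr ρ' ρ)

/-- A tree as an extended term. -/
def BT.toETm {V N β : Type} : BT β → ETm V N (TSym β)
  | .e => .tm .e
  | .ltr a => .tm (.ltr a)
  | .br l r => .app (.app (.tm .br) [l.toETm]) [r.toETm]

/-- v has the shape π₁ * (π₂ * ⋯ (π_n * x)⋯) (n ≥ 0) for trees π₁,…,π_n,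
    where * is the binary terminal br. -/
inductive RightSpine {N β : Type} (x : Nat) : ETm Nat N (TSym β) → Prop where
  | base : RightSpine x (.var x)
  | cons {v : ETm Nat N (TSym β)} (π : BT β) : RightSpine x v →
      RightSpine x (.app (.app (.tm .br) [BT.toETm π]) [v])

/-!
A normal form headed by a non-terminal or an abstraction stays stuck after substituting for
its variables, so it cannot reach a tree; hence `v` is the variable `x` or is headed by a
terminal. Typing at a base type then leaves a leaf or a branch `br t₁ t₂`, whose argument sets
are singletons by normality, and any reduction of the branch to a tree splits into reductions
of the two sides. By the same analysis a branch of type `o` is itself a tree. Since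
`br : o → oR → oR` and a tree is typed in a balanced environment, the linear variable `x` must
occur in the right branch, which again has type `oR`, and we recurse there.
-/

theorem appLE_append {V N T : Type} (u : ETm V N T) (Us Vs : List (List (ETm V N T))) :
    appLE u (Us ++ Vs) = appLE (appLE u Us) Vs := by
  induction Us generalizing u with
  | nil => rfl
  | cons U Us ih => exact ih (.app u U)

namespace ETm

variable {V N T : Type}

@[simp] def head : ETm V N T → ETm V N T
  | .app u _ => u.head
  | u => u

@[simp] def args : ETm V N T → List (List (ETm V N T))
  | .app u U => u.args ++ [U]
  | _ => []

@[simp] theorem head_appLE (u : ETm V N T) (Us : List (List (ETm V N T))) :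
    (appLE u Us).head = u.head := by
  induction Us generalizing u with
  | nil => rfl
  | cons U Us ih => exact ih (.app u U)

@[simp] theorem args_appLE (u : ETm V N T) (Us : List (List (ETm V N T))) :
    (appLE u Us).args = u.args ++ Us := by
  induction Us generalizing u with
  | nil => simp [appLE]
  | cons U Us ih => simp [appLE, ih (.app u U)]

theorem head_ne_app (s : ETm V N T) (U : List (ETm V N T)) :
    ∀ u : ETm V N T, u.head ≠ .app s U
  | .app u _ => by simpa using head_ne_app s U u
  | .var _ | .nt _ | .tm _ | .lam _ _ => by simp

theorem appLE_head_args : ∀ u : ETm V N T, appLE u.head u.args = u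
  | .app u U => by rw [head, args, appLE_append, appLE_head_args u]; rfl
  | .var _ | .nt _ | .tm _ | .lam _ _ => rfl

end ETm

section Substitution

variable {V N T : Type} [DecidableEq V]

theorem dsub_app (σ : V → Option (List (ETm V N T))) (u : ETm V N T) (U : List (ETm V N T)) :
    dsub σ (.app u U) = (dsub σ u).map (fun v => .app v (U.flatMap (dsub σ))) := by
  rw [dsub]
  simp

theorem dsub_ne_nil : ∀ (σ : V → Option (List (ETm V N T))),
    (∀ y L, σ y = some L → L ≠ []) → ∀ u : ETm V N T, dsub σ u ≠ []
  | σ, hσ, .var y => by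
      cases hy : σ y
      · simp [dsub, hy]
      · simpa [dsub, hy] using hσ y _ hy
  | _, _, .nt _ | _, _, .tm _ => by simp [dsub]
  | σ, hσ, .app u U => by simpa [dsub_app] using dsub_ne_nil σ hσ u
  | σ, hσ, .lam y b => by
      rw [dsub, ne_eq, List.map_eq_nil_iff]
      refine dsub_ne_nil _ (fun z L hz => ?_) b
      split_ifs at hz
      exact hσ z L hz

theorem exists_eq_appLE_of_mem_dsub (σ : V → Option (List (ETm V N T))) :
    ∀ {u w : ETm V N T}, w ∈ dsub σ u →
    ∃ h ∈ dsub σ u.head, ∃ Ws : List (List (ETm V N T)),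
      Ws.length = u.args.length ∧ w = appLE h Ws
  | .app u U, w, hw => by
      rw [dsub_app] at hw
      obtain ⟨v, hv, rfl⟩ := List.mem_map.mp hw
      obtain ⟨h, hh, Ws, hlen, rfl⟩ := exists_eq_appLE_of_mem_dsub σ hv
      exact ⟨h, hh, Ws ++ [U.flatMap (dsub σ)], by simp [hlen], by simp [appLE_append, appLE]⟩
  | .var _, w, hw | .nt _, w, hw | .tm _, w, hw | .lam _ _, w, hw =>
      ⟨w, hw, [], rfl, rfl⟩

end Substitution

theorem sigmaOf_mem {V N T : Type} [DecidableEq V] {xs : List V} {Us : List (List (ETm V N T))}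
    {y : V} {L : List (ETm V N T)} (h : sigmaOf xs Us y = some L) : L ∈ Us := by
  obtain ⟨p, hp, rfl⟩ := Option.map_eq_some_iff.mp h
  exact (List.of_mem_zip (List.mem_of_find?_eq_some hp)).2

section Reduction

variable {V N T : Type} [DecidableEq V] {ar : T → Nat} (G : EGrammar V N T ar)

def ENormal (u : ETm V N T) : Prop := ∀ u', ¬ ERed G u u'

variable {G}

theorem ERed.head_eq_nt_or_tm {u u' : ETm V N T} (h : ERed G u u') :
    (∃ A, u.head = .nt A) ∨ ∃ a, u.head = .tm a := by
  cases h with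
  | step => exact .inl ⟨_, ETm.head_appLE _ _⟩
  | ctx | collapse => exact .inr ⟨_, ETm.head_appLE _ _⟩

theorem ERed.exists_of_appLE_nt {A : N} {Ws Us : List (List (ETm V N T))} {w' : ETm V N T}
    (h : ERed G (appLE (.nt A) Ws) w') (hlen : Us.length = Ws.length)
    (hUs : ∀ U ∈ Us, U ≠ []) :
    ∃ u', ERed G (appLE (.nt A) Us) u' := by
  generalize hw : appLE (.nt A) Ws = w at h
  cases h with
  | @step A' xs body Ws' _ hrule hlen' _ =>
      obtain rfl : A = A' := by simpa using congrArg ETm.head hw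
      obtain rfl : Ws = Ws' := by simpa using congrArg ETm.args hw
      obtain ⟨u', hu'⟩ := List.exists_mem_of_ne_nil _
        (dsub_ne_nil (sigmaOf xs Us) (fun y L hL => hUs L (sigmaOf_mem hL)) body)
      exact ⟨u', .step hrule (by omega) hu'⟩
  | ctx | collapse => simpa using congrArg ETm.head hw

theorem ERedStar.eq_of_eNormal {w t : ETm V N T} (hs : ERedStar G w t) (hw : ENormal G w) :
    t = w :=
  (Relation.reflTransGen_iff_eq hw).mp hs

end Reduction

theorem BT.exists_head_toETm_eq_tm {V N β : Type} (π : BT β) :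
    ∃ a, (π.toETm : ETm V N (TSym β)).head = .tm a := by
  cases π <;> exact ⟨_, rfl⟩

section TreeReduction

variable {V N β : Type} [DecidableEq V] {ar : TSym β → Nat} {G : EGrammar V N (TSym β) ar}

def SubstReducesTo (G : EGrammar V N (TSym β) ar) (σ : V → Option (List (ETm V N (TSym β))))
    (v : ETm V N (TSym β)) (π : BT β) : Prop :=
  ∃ w ∈ dsub σ v, ERedStar G w π.toETm

theorem SubstReducesTo.exists_head_eq_tm {σ : V → Option (List (ETm V N (TSym β)))}
    {v : ETm V N (TSym β)} {π : BT β} (hred : SubstReducesTo G σ v π) (hv : ENormal G v)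
    (hargs : ∀ U ∈ v.args, U ≠ []) (hvar : ∀ y, v.head ≠ .var y) :
    ∃ a, v.head = .tm a := by
  obtain ⟨w, hw, hs⟩ := hred
  obtain ⟨h, hh, Ws, hlen, rfl⟩ := exists_eq_appLE_of_mem_dsub σ hw
  have head_tm (hn : ENormal G (appLE h Ws)) : ∃ a, h.head = .tm a := by
    simpa [hs.eq_of_eNormal hn] using BT.exists_head_toETm_eq_tm (V := V) (N := N) π
  cases hvh : v.head with
  | var y => exact absurd hvh (hvar y)
  | tm a => exact ⟨a, rfl⟩
  | app s U => exact absurd hvh (ETm.head_ne_app s U v)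
  | nt A =>
      rw [hvh, dsub] at hh
      obtain rfl := List.mem_singleton.mp hh
      refine absurd (head_tm fun w' hr => ?_) (by simp)
      obtain ⟨u', hu'⟩ := hr.exists_of_appLE_nt hlen.symm hargs
      exact hv u' (by rwa [← ETm.appLE_head_args v, hvh])
  | lam y b =>
      rw [hvh, dsub] at hh
      obtain ⟨b', -, rfl⟩ := List.mem_map.mp hh
      refine absurd (head_tm fun w' hr => ?_) (by simp)
      rcases hr.head_eq_nt_or_tm with ⟨_, h⟩ | ⟨_, h⟩ <;> simp at h

end TreeReduction

theorem BalEnv.union {Φ₁ Φ₂ : Finset (Nat × Ty2)} (h₁ : BalEnv Φ₁) (h₂ : BalEnv Φ₂) :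
    BalEnv (Φ₁ ∪ Φ₂) :=
  fun p hp => (Finset.mem_union.mp hp).elim (h₁ p) (h₂ p)

namespace RTy

variable {N β : Type} {ntyR : N → Ty2} {Φ : Finset (Nat × Ty2)} {u : ETm Nat N (TSym β)}
  {ρ : Ty2}

theorem args_ne_nil (h : RTy ntyR Φ u ρ) : ∀ U ∈ u.args, U ≠ [] := by
  induction h with
  | app _ hne _ _ ih =>
      intro U hU
      rcases List.mem_append.mp hU with hU | hU
      · exact ih U hU
      · rwa [List.mem_singleton.mp hU]
  | _ => simp

theorem eq_var_of_head_eq_var {x y : Nat} (h : RTy ntyR Φ u ρ) (hΦ : Φ ⊆ {(x, .oR)})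
    (hu : u.head = .var y) : u = .var x ∧ ρ = .oR := by
  induction h with
  | var hmem _ =>
      obtain ⟨rfl, rfl⟩ := Prod.mk.inj (Finset.mem_singleton.mp (hΦ hmem))
      exact ⟨rfl, rfl⟩
  | app _ _ _ _ ih =>
      obtain ⟨-, h⟩ := ih (fun p hp => hΦ (Finset.mem_union_left _ hp)) hu
      cases h
  | _ => simp at hu

theorem shape_of_head_eq_tm {a : TSym β} (h : RTy ntyR Φ u ρ) (hu : u.head = .tm a) :
    u = .tm a ∨ (∃ U, u = .app (.tm .br) U) ∨
      ∃ U₁ U₂, u = .app (.app (.tm .br) U₁) U₂ := by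
  induction h with
  | app h₁ _ _ _ ih =>
      rcases ih hu with rfl | ⟨U, rfl⟩ | ⟨U₁, U₂, rfl⟩
      · cases h₁ <;> exact .inr (.inl ⟨_, rfl⟩)
      · exact .inr (.inr ⟨_, _, rfl⟩)
      · cases h₁ with | app h₁ _ _ _ => cases h₁ with | app h₁ _ _ _ => cases h₁
  | _ => simp_all

theorem balEnv_of_toETm : ∀ {π : BT β} {Φ : Finset (Nat × Ty2)} {ρ : Ty2},
    RTy ntyR Φ π.toETm ρ → BalEnv Φ
  | .e, _, _, h | .ltr _, _, _, h => by cases h <;> assumption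
  | .br l r, _, _, h => by
      cases h with
      | @app Φ _ _ _ _ _ h₁ _ h₂ _ =>
        cases h₁ with
        | @app Φ₀ _ _ _ _ _ h₀ _ h₁ _ =>
          have h₀ : BalEnv Φ₀ := by cases h₀ <;> assumption
          have hl := balEnv_of_toETm (π := l) (h₁ _ (List.mem_singleton_self _))
          have hr := balEnv_of_toETm (π := r) (h₂ _ (List.mem_singleton_self _))
          exact (h₀.union hl).union hr

end RTy

section BranchReduction

variable {V N β : Type} [DecidableEq V]

theorem dsub_br (σ : V → Option (List (ETm V N (TSym β)))) (t₁ t₂ : ETm V N (TSym β)) :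
    dsub σ (.app (.app (.tm .br) [t₁]) [t₂]) =
      [.app (.app (.tm .br) (dsub σ t₁)) (dsub σ t₂)] := by
  simp [dsub_app, dsub]

variable {ar : TSym β → Nat} {G : EGrammar V N (TSym β) ar}

def ArgRedStar (G : EGrammar V N (TSym β) ar) (D D' : List (ETm V N (TSym β))) : Prop :=
  ∀ u' ∈ D', ∃ u ∈ D, ERedStar G u u'

theorem ArgRedStar.refl (D : List (ETm V N (TSym β))) : ArgRedStar G D D :=
  fun u hu => ⟨u, hu, .refl⟩

theorem ArgRedStar.singleton {D : List (ETm V N (TSym β))} {u u' : ETm V N (TSym β)}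
    (hu : u ∈ D) (h : ERedStar G u u') : ArgRedStar G D [u'] := by
  simpa [ArgRedStar] using ⟨u, hu, h⟩

theorem ERed.of_br {D₁ D₂ : List (ETm V N (TSym β))} {s : ETm V N (TSym β)}
    (h : ERed G (.app (.app (.tm .br) D₁) D₂) s) :
    ∃ D₁' D₂', s = .app (.app (.tm .br) D₁') D₂' ∧
      ArgRedStar G D₁ D₁' ∧ ArgRedStar G D₂ D₂' := by
  generalize hu : (.app (.app (.tm .br) D₁) D₂ : ETm V N (TSym β)) = u at h
  have hargs := congrArg ETm.args hu
  cases h with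
  | step => simpa using congrArg ETm.head hu
  | @ctx a u u' Us₁ Us₂ hr =>
      obtain rfl : a = .br := by simpa using (congrArg ETm.head hu).symm
      rcases Us₁ with _ | ⟨X, _ | ⟨Y, Us₁⟩⟩ <;> simp at hargs
      · obtain ⟨rfl, rfl⟩ := hargs
        exact ⟨_, _, rfl, .singleton (List.mem_singleton_self u) (.single hr), .refl _⟩
      · obtain ⟨rfl, rfl, rfl⟩ := hargs
        exact ⟨_, _, rfl, .refl _, .singleton (List.mem_singleton_self u) (.single hr)⟩
  | @collapse a u U Us₁ Us₂ hmem =>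
      obtain rfl : a = .br := by simpa using (congrArg ETm.head hu).symm
      rcases Us₁ with _ | ⟨X, _ | ⟨Y, Us₁⟩⟩ <;> simp at hargs
      · obtain ⟨rfl, rfl⟩ := hargs
        exact ⟨_, _, rfl, .singleton hmem .refl, .refl _⟩
      · obtain ⟨rfl, rfl, rfl⟩ := hargs
        exact ⟨_, _, rfl, .refl _, .singleton hmem .refl⟩

theorem ERedStar.exists_of_br {D₁ D₂ : List (ETm V N (TSym β))} {π : BT β}
    (hs : ERedStar G (.app (.app (.tm .br) D₁) D₂) π.toETm) :
    ∃ π₁ π₂, π = .br π₁ π₂ ∧ (∃ u₁ ∈ D₁, ERedStar G u₁ π₁.toETm) ∧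
      ∃ u₂ ∈ D₂, ERedStar G u₂ π₂.toETm := by
  generalize hu : (.app (.app (.tm .br) D₁) D₂ : ETm V N (TSym β)) = u at hs
  induction hs using Relation.ReflTransGen.head_induction_on generalizing D₁ D₂ with
  | refl =>
      cases π with
      | e | ltr => simp [BT.toETm] at hu
      | br π₁ π₂ =>
          simp only [BT.toETm, ETm.app.injEq] at hu
          obtain ⟨⟨-, rfl⟩, rfl⟩ := hu
          exact ⟨π₁, π₂, rfl, ⟨_, List.mem_singleton_self _, .refl⟩,
            ⟨_, List.mem_singleton_self _, .refl⟩⟩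
  | head hr _ ih =>
      subst hu
      obtain ⟨D₁', D₂', rfl, h₁, h₂⟩ := hr.of_br
      obtain ⟨π₁, π₂, rfl, ⟨u₁', hu₁', hs₁⟩, ⟨u₂', hu₂', hs₂⟩⟩ := ih rfl
      obtain ⟨u₁, hu₁, hs₁'⟩ := h₁ u₁' hu₁'
      obtain ⟨u₂, hu₂, hs₂'⟩ := h₂ u₂' hu₂'
      exact ⟨π₁, π₂, rfl, ⟨u₁, hu₁, hs₁'.trans hs₁⟩, ⟨u₂, hu₂, hs₂'.trans hs₂⟩⟩

theorem SubstReducesTo.of_br {σ : V → Option (List (ETm V N (TSym β)))}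
    {t₁ t₂ : ETm V N (TSym β)} {π : BT β}
    (h : SubstReducesTo G σ (.app (.app (.tm .br) [t₁]) [t₂]) π) :
    ∃ π₁ π₂, π = .br π₁ π₂ ∧ SubstReducesTo G σ t₁ π₁ ∧ SubstReducesTo G σ t₂ π₂ := by
  obtain ⟨w, hw, hs⟩ := h
  rw [dsub_br, List.mem_singleton] at hw
  subst hw
  exact hs.exists_of_br

end BranchReduction

section NormalBranch

variable {V N β : Type} [DecidableEq V] {G : EGrammar V N (TSym β) treeAr}

theorem ENormal.exists_eq_singletons_of_br {U₁ U₂ : List (ETm V N (TSym β))}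
    (hn : ENormal G (.app (.app (.tm .br) U₁) U₂)) (h₁ : U₁ ≠ []) (h₂ : U₂ ≠ []) :
    ∃ t₁ t₂, U₁ = [t₁] ∧ U₂ = [t₂] := by
  obtain ⟨t₁, rfl⟩ : ∃ t₁, U₁ = [t₁] := by
    refine List.length_eq_one_iff.mp (not_not.mp fun hne => ?_)
    obtain ⟨t, ht⟩ := List.exists_mem_of_ne_nil _ h₁
    exact hn _ (ERed.collapse (a := .br) (Us₁ := []) (Us₂ := [U₂]) ht hne rfl)
  obtain ⟨t₂, rfl⟩ : ∃ t₂, U₂ = [t₂] := by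
    refine List.length_eq_one_iff.mp (not_not.mp fun hne => ?_)
    obtain ⟨t, ht⟩ := List.exists_mem_of_ne_nil _ h₂
    exact hn _ (ERed.collapse (a := .br) (Us₁ := [[t₁]]) (Us₂ := []) ht hne rfl)
  exact ⟨t₁, t₂, rfl, rfl⟩

theorem ENormal.of_br_left {t₁ t₂ : ETm V N (TSym β)}
    (hn : ENormal G (.app (.app (.tm .br) [t₁]) [t₂])) : ENormal G t₁ :=
  fun _ hr => hn _ (ERed.ctx (a := TSym.br) (Us₁ := []) (Us₂ := [[t₂]]) hr rfl)

theorem ENormal.of_br_right {t₁ t₂ : ETm V N (TSym β)}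
    (hn : ENormal G (.app (.app (.tm .br) [t₁]) [t₂])) : ENormal G t₂ :=
  fun _ hr => hn _ (ERed.ctx (a := TSym.br) (Us₁ := [[t₁]]) (Us₂ := []) hr rfl)

end NormalBranch

section RightmostOccurrence

variable {N β : Type} {G : EGrammar Nat N (TSym β) treeAr} {ntyR : N → Ty2} {x : Nat}
  {σ : Nat → Option (List (ETm Nat N (TSym β)))}

theorem exists_eq_toETm_of_rTy_o {Φ : Finset (Nat × Ty2)} {t : ETm Nat N (TSym β)} {π : BT β}
    (hn : ENormal G t) (hty : RTy ntyR Φ t .o) (hΦ : Φ ⊆ {(x, .oR)})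
    (hred : SubstReducesTo G σ t π) : ∃ π' : BT β, t = π'.toETm := by
  by_cases hvar : ∃ y, t.head = .var y
  · obtain ⟨y, hy⟩ := hvar
    cases (hty.eq_var_of_head_eq_var hΦ hy).2
  obtain ⟨a, ha⟩ := hred.exists_head_eq_tm hn hty.args_ne_nil (not_exists.mp hvar)
  rcases hty.shape_of_head_eq_tm ha with rfl | ⟨U, rfl⟩ | ⟨U₁, U₂, rfl⟩
  · cases hty with
    | ltr => exact ⟨.ltr _, rfl⟩
    | epsO => exact ⟨.e, rfl⟩
  · cases hty with | app h => cases h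
  · obtain ⟨t₁, t₂, rfl, rfl⟩ := hn.exists_eq_singletons_of_br
      (hty.args_ne_nil U₁ (by simp)) (hty.args_ne_nil U₂ (by simp))
    obtain ⟨π₁, π₂, -, hred₁, hred₂⟩ := hred.of_br
    cases hty with
    | app h₁ _ h₂ _ =>
      cases h₁ with
      | app h₀ _ h₁ _ =>
        cases h₀
        obtain ⟨⟨-, hΦ₁⟩, hΦ₂⟩ :=
          (Finset.union_subset_iff.mp hΦ).imp_left Finset.union_subset_iff.mp
        obtain ⟨π₁', rfl⟩ :=
          exists_eq_toETm_of_rTy_o hn.of_br_left (h₁ _ (List.mem_singleton_self _)) hΦ₁ hred₁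
        obtain ⟨π₂', rfl⟩ :=
          exists_eq_toETm_of_rTy_o hn.of_br_right (h₂ _ (List.mem_singleton_self _)) hΦ₂
            hred₂
        exact ⟨.br π₁' π₂', rfl⟩
termination_by sizeOf t

theorem rightSpine_of_rTy_oR {v : ETm Nat N (TSym β)} {π : BT β} (hn : ENormal G v)
    (hty : RTy ntyR {(x, .oR)} v .oR) (hred : SubstReducesTo G σ v π) : RightSpine x v := by
  by_cases hvar : ∃ y, v.head = .var y
  · obtain ⟨y, hy⟩ := hvar
    rw [(hty.eq_var_of_head_eq_var subset_rfl hy).1]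
    exact .base
  obtain ⟨a, ha⟩ := hred.exists_head_eq_tm hn hty.args_ne_nil (not_exists.mp hvar)
  generalize hΦ : ({(x, .oR)} : Finset (Nat × Ty2)) = Φ at hty
  rcases hty.shape_of_head_eq_tm ha with rfl | ⟨U, rfl⟩ | ⟨U₁, U₂, rfl⟩
  · cases hty with | epsR hb => cases hb _ (hΦ ▸ Finset.mem_singleton_self _)
  · cases hty with | app h => cases h
  · obtain ⟨t₁, t₂, rfl, rfl⟩ := hn.exists_eq_singletons_of_br
      (hty.args_ne_nil U₁ (by simp)) (hty.args_ne_nil U₂ (by simp))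
    obtain ⟨π₁, π₂, -, hred₁, hred₂⟩ := hred.of_br
    cases hty with
    | @app _ Φ₂ _ _ _ _ h₁ _ h₂ _ =>
      cases h₁ with
      | @app _ Φ₁ _ _ _ _ h₀ _ h₁ _ =>
        cases h₀ with
        | brR hb₀ =>
          have h₁ := h₁ _ (List.mem_singleton_self _)
          have hΦ₁ : Φ₁ ⊆ {(x, .oR)} := by
            rw [hΦ]
            exact Finset.subset_union_right.trans Finset.subset_union_left
          obtain ⟨π₁', rfl⟩ := exists_eq_toETm_of_rTy_o hn.of_br_left h₁ hΦ₁ hred₁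
          -- the linear variable cannot occur in the balanced left branch
          have hx : (x, Ty2.oR) ∈ Φ₂ := by
            rcases Finset.mem_union.mp (hΦ ▸ Finset.mem_singleton_self _) with h | h
            · nomatch (hb₀.union h₁.balEnv_of_toETm) _ h
            · exact h
          have hΦ₂ : Φ₂ = {(x, .oR)} := Finset.Subset.antisymm
            (hΦ ▸ Finset.subset_union_right) (Finset.singleton_subset_iff.mpr hx)
          exact .cons π₁' (rightSpine_of_rTy_oR hn.of_br_right
            (hΦ₂ ▸ h₂ _ (List.mem_singleton_self _)) hred₂)
termination_by sizeOf v

end RightmostOccurrence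

/-- Rightmost-occurrence lemma: if v is a normal form, x : oR ⊢ v : oR in the
    linear refinement type system, and [U/x]v reduces to some tree π, then
    v = π₁ * (π₂ * ⋯ (π_n * x)⋯) for some n ≥ 0 and trees π₁,…,π_n. -/
theorem stmt7 {N β : Type} (G : EGrammar Nat N (TSym β) treeAr)
    (ntyR : N → Ty2) (x : Nat) (v : ETm Nat N (TSym β))
    (hnf : ∀ u', ¬ ERed G v u')
    (hty : RTy ntyR {(x, Ty2.oR)} v .oR)
    (hred : ∃ (U : List (ETm Nat N (TSym β))) (w : ETm Nat N (TSym β))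
        (π : BT β),
        DSub (fun y => if y = x then some U else none) v w ∧
        ERedStar G w π.toETm) :
    RightSpine x v := by
  obtain ⟨U, w, π, hw, hs⟩ := hred
  exact rightSpine_of_rTy_oR hnf hty ⟨w, hw, hs⟩
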